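/- Fix h ∈ ℕ. The collection of all h-flipclasses of all symmetric groups 𝔖_n (n ranging over the positive integers) has only finitely many isomorphism classes. -/

import Mathlib

open MvPolynomial

/-- The symmetric group `𝔖ₙ`, realized as permutations of `Fin n`. -/
abbrev Pm (n : ℕ) := Equiv.Perm (Fin n)

/-- The Coxeter length of a permutation: its number of inversions. -/
def len {n : ℕ} (w : Pm n) : ℕ :=
  (Finset.univ.filter fun q : Fin n × Fin n => q.1 < q.2 ∧ w q.2 < w q.1).card

/-- Edges of the Bruhat graph `B(𝔖ₙ)`: `a → b` iff `b * a⁻¹` is a transposition and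
`ℓ(a) < ℓ(b)`.  The label of the edge is `b * a⁻¹`. -/
def BEdge {n : ℕ} (a b : Pm n) : Prop :=
  (b * a⁻¹).IsSwap ∧ len a < len b

/-- Bruhat order: `u ≤ v` iff there is a directed path from `u` to `v` in the Bruhat graph. -/
def bruhatLE {n : ℕ} : Pm n → Pm n → Prop := Relation.ReflTransGen BEdge

/-- Strict Bruhat order. -/
def bruhatLT {n : ℕ} (a b : Pm n) : Prop := bruhatLE a b ∧ a ≠ b

/-- Covering relation of Bruhat order. -/
def bruhatCov {n : ℕ} (a b : Pm n) : Prop :=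
  bruhatLT a b ∧ ∀ z, bruhatLT a z → bruhatLT z b → False

/-- A path of length `h` from `u` to `v` in the Bruhat graph, encoded as a function
`ℕ → 𝔖ₙ` normalized to be constantly `v` from time `h` on. -/
def IsPath (n h : ℕ) (u v : Pm n) (p : ℕ → Pm n) : Prop :=
  p 0 = u ∧ (∀ j, h ≤ j → p j = v) ∧ ∀ i, i < h → BEdge (p i) (p (i + 1))

/-- The `i`-th label (`0 ≤ i ≤ h-1`) of a path. -/
def lab {n : ℕ} (p : ℕ → Pm n) (i : ℕ) : Pm n := p (i + 1) * (p i)⁻¹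

/-- `q` is obtained from `p` by the `i`-th flip (`1 ≤ i ≤ h-1`): they differ exactly at
position `i`. -/
def FlipAt {n : ℕ} (h i : ℕ) (p q : ℕ → Pm n) : Prop :=
  0 < i ∧ i < h ∧ p i ≠ q i ∧ ∀ j, j ≠ i → p j = q j

/-- One application of a flip operator on paths of length `h` from `u` to `v`. -/
def FlipStep (n h : ℕ) (u v : Pm n) (p q : ℕ → Pm n) : Prop :=
  IsPath n h u v p ∧ IsPath n h u v q ∧ ∃ i, FlipAt h i p q

/-- `F` is an `h`-flipclass of paths from `u` to `v`: an orbit of the group generated by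
the flip operators, i.e. a connected component under single flips. -/
def IsFlipclass (n h : ℕ) (u v : Pm n) (F : Set (ℕ → Pm n)) : Prop :=
  ∃ p, IsPath n h u v p ∧ F = {q | Relation.ReflTransGen (FlipStep n h u v) p q}

/-- Vertex set of the support graph `S_F`. -/
def SV (n h : ℕ) (F : Set (ℕ → Pm n)) : Set (Pm n) :=
  {a | ∃ p ∈ F, ∃ i, i ≤ h ∧ p i = a}

/-- Edge relation of the support graph `S_F` (labels are determined: `b * a⁻¹`). -/
def SE (n h : ℕ) (F : Set (ℕ → Pm n)) (a b : Pm n) : Prop :=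
  ∃ p ∈ F, ∃ i, i < h ∧ p i = a ∧ p (i + 1) = b

/-- Vertex set of the time-support graph `TS_F`. -/
def TSV (n h : ℕ) (F : Set (ℕ → Pm n)) : Set (Pm n × ℕ) :=
  {x | x.2 ≤ h ∧ ∃ p ∈ F, p x.2 = x.1}

/-- Edge relation of the time-support graph `TS_F`. -/
def TSE (n h : ℕ) (F : Set (ℕ → Pm n)) (x y : Pm n × ℕ) : Prop :=
  x.2 < h ∧ y.2 = x.2 + 1 ∧ ∃ p ∈ F, p x.2 = x.1 ∧ p (x.2 + 1) = y.1

/-- In-degree of a vertex of `TS_F`. -/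
noncomputable def indeg (n h : ℕ) (F : Set (ℕ → Pm n)) (x : Pm n × ℕ) : ℕ :=
  Set.ncard {w | TSE n h F w x}

/-- Out-degree of a vertex of `TS_F`. -/
noncomputable def outdeg (n h : ℕ) (F : Set (ℕ → Pm n)) (x : Pm n × ℕ) : ℕ :=
  Set.ncard {w | TSE n h F x w}

/-- The `t`-vector of `F`: `tᵢ` is the number of vertices of `TS_F` at time `i`. -/
noncomputable def tvec (n h : ℕ) (F : Set (ℕ → Pm n)) (i : ℕ) : ℕ :=
  Set.ncard {a : Pm n | (a, i) ∈ TSV n h F}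

lemma TSV_finite (n h : ℕ) (F : Set (ℕ → Pm n)) : (TSV n h F).Finite :=
  Set.Finite.subset (Set.finite_univ.prod (Set.finite_Iic h))
    (fun _ hx => Set.mem_prod.mpr ⟨Set.mem_univ _, hx.1⟩)

/-- The `ι`-polynomial of `F`:
`ι_F(x,y,t) = Σ_{(a,i) ∈ V(TS_F)} x^indeg(a,i) y^outdeg(a,i) t^i`
(the variables `x, y, t` are `X 0, X 1, X 2`). -/
noncomputable def iota (n h : ℕ) (F : Set (ℕ → Pm n)) : MvPolynomial (Fin 3) ℤ :=
  ∑ x ∈ (TSV_finite n h F).toFinset,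
    X 0 ^ indeg n h F x * X 1 ^ outdeg n h F x * X 2 ^ x.2

/-- A reflection ordering on the transpositions of `𝔖ₙ`: a total order `⪯` on the set of
transpositions such that for all `a < b < c`, either
`(a,b) ⪯ (a,c) ⪯ (b,c)` or `(b,c) ⪯ (a,c) ⪯ (a,b)`. -/
structure ReflOrder (n : ℕ) where
  le : Pm n → Pm n → Prop
  le_refl : ∀ t : Pm n, t.IsSwap → le t t
  le_antisymm : ∀ s t : Pm n, s.IsSwap → t.IsSwap → le s t → le t s → s = t
  le_trans : ∀ r s t : Pm n, r.IsSwap → s.IsSwap → t.IsSwap → le r s → le s t → le r t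
  le_total : ∀ s t : Pm n, s.IsSwap → t.IsSwap → le s t ∨ le t s
  reflection_cond : ∀ a b c : Fin n, a < b → b < c →
    (le (Equiv.swap a b) (Equiv.swap a c) ∧ le (Equiv.swap a c) (Equiv.swap b c)) ∨
    (le (Equiv.swap b c) (Equiv.swap a c) ∧ le (Equiv.swap a c) (Equiv.swap a b))

/-- A path (of length `h`) is increasing w.r.t. an order `le` on transpositions if its
sequence of labels is weakly increasing. -/
def IncreasingRel {n : ℕ} (h : ℕ) (le : Pm n → Pm n → Prop) (p : ℕ → Pm n) : Prop :=
  ∀ i, i + 1 < h → le (lab p i) (lab p (i + 1))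

/-- The number of increasing paths (w.r.t. a reflection ordering) in `F`. -/
noncomputable def cnt (n h : ℕ) (F : Set (ℕ → Pm n)) (ord : ReflOrder n) : ℕ :=
  Set.ncard {p ∈ F | IncreasingRel h ord.le p}

/-- Lexicographic comparison of the label sequences of two paths of length `h`. -/
def LabelLexLe {n : ℕ} (h : ℕ) (le : Pm n → Pm n → Prop) (p q : ℕ → Pm n) : Prop :=
  (∀ i, i < h → lab p i = lab q i) ∨
  ∃ i, i < h ∧ (∀ j, j < i → lab p j = lab q j) ∧ lab p i ≠ lab q i ∧ le (lab p i) (lab q i)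

/-- A path of length `h` from `(u,0)` to `(v,h)` in the time-support graph `TS_F`,
encoded by its sequence of permutation components. -/
def IsTSPath (n h : ℕ) (F : Set (ℕ → Pm n)) (u v : Pm n) (y : ℕ → Pm n) : Prop :=
  y 0 = u ∧ (∀ j, h ≤ j → y j = v) ∧ ∀ i, i < h → TSE n h F (y i, i) (y (i + 1), i + 1)

/-- The set of labels of the paths of `F`. -/
def labelSet (n h : ℕ) (F : Set (ℕ → Pm n)) : Set (Pm n) :=
  {t | ∃ p ∈ F, ∃ i, i < h ∧ lab p i = t}

/-- Lexicographic order on the transpositions of `𝔖ₙ`: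
`(a,b) ⪯ (c,d)` (with `a<b`, `c<d`) iff `a < c`, or `a = c` and `b ≤ d`. -/
def lexLe (n : ℕ) (s t : Pm n) : Prop :=
  ∃ a b c d : Fin n, a < b ∧ c < d ∧ s = Equiv.swap a b ∧ t = Equiv.swap c d ∧
    (a < c ∨ (a = c ∧ b ≤ d))

/-- Isomorphism of flipclasses: a pair `(f, g)` where `f` is a flips-preserving bijection
on the underlying permutations (inducing a bijection of the path sets), and `g` is a
label-matching bijection of the label sets that is order preserving w.r.t. the
lexicographic orders. -/
def FlipclassIso (n m h : ℕ) (F : Set (ℕ → Pm n)) (F' : Set (ℕ → Pm m)) : Prop :=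
  ∃ f : Pm n → Pm m, ∃ g : Pm n → Pm m,
    Set.BijOn f (SV n h F) (SV m h F') ∧
    Set.BijOn (fun p => f ∘ p) F F' ∧
    (∀ p ∈ F, ∀ q ∈ F, ∀ i, FlipAt h i p q → FlipAt h i (f ∘ p) (f ∘ q)) ∧
    Set.BijOn g (labelSet n h F) (labelSet m h F') ∧
    (∀ p ∈ F, ∀ i, i < h → g (lab p i) = lab (f ∘ p) i) ∧
    (∀ s t, s ∈ labelSet n h F → t ∈ labelSet n h F → lexLe n s t → lexLe m (g s) (g t))

/-- `G(Γ)` is connected: any two letters moved by some label of the path `p` are joined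
by a chain of labels. -/
def IrredPath (n k : ℕ) (p : ℕ → Pm n) : Prop :=
  ∀ a b : Fin n, (∃ i, i < k ∧ lab p i a ≠ a) → (∃ i, i < k ∧ lab p i b ≠ b) →
    Relation.ReflTransGen (fun x y => ∃ i, i < k ∧ lab p i = Equiv.swap x y) a b

/-- The set of positions of the values in `E` in the one-line notation of `w`,
i.e. `w⁻¹(E)`. -/
def posSet {n : ℕ} (w : Pm n) (E : Finset (Fin n)) : Finset (Fin n) := E.image ⇑w.symm

lemma mem_posSet {n : ℕ} {w : Pm n} {E : Finset (Fin n)} {x : Fin n} :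
    x ∈ posSet w E ↔ w x ∈ E := by
  constructor
  · intro hx
    rcases Finset.mem_image.mp hx with ⟨y, hy, rfl⟩
    simpa using hy
  · intro hx
    exact Finset.mem_image.mpr ⟨w x, hx, by simp⟩

lemma posSet_card {n : ℕ} (w : Pm n) (E : Finset (Fin n)) : (posSet w E).card = E.card :=
  Finset.card_image_of_injective _ w.symm.injective

/-- The "pattern" map `r_E : 𝔖ₙ → 𝔖ₘ` (`|E| = m`): delete from the one-line notation of
`w` the values not in `E`, and renumber the values in `E` via the order preserving
bijection `E → [m]`. -/
noncomputable def rE (n m : ℕ) (E : Finset (Fin n)) (hm : E.card = m) (w : Pm n) : Pm m :=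
  (((posSet w E).orderIsoOfFin (by rw [posSet_card, hm])).toEquiv.trans
    (⟨fun x => ⟨w x.1, mem_posSet.mp x.2⟩,
      fun y => ⟨w.symm y.1, mem_posSet.mpr (by simp [y.2])⟩,
      fun x => Subtype.ext (by simp),
      fun y => Subtype.ext (by simp)⟩ :
        {x // x ∈ posSet w E} ≃ {y // y ∈ E})).trans (E.orderIsoOfFin hm).toEquiv.symm

/-- `r_E` applied to each vertex of a path. -/
noncomputable def rEPath (n m : ℕ) (E : Finset (Fin n)) (hm : E.card = m)
    (p : ℕ → Pm n) : ℕ → Pm m := fun j => rE n m E hm (p j)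

/-- The total order `⪯_{r_E}` induced on the transpositions of `𝔖ₘ` by a reflection
ordering of `𝔖ₙ` via the order preserving bijection `r_E⁻¹ : [m] → E`. -/
def inducedOrd (n m : ℕ) (ord : ReflOrder n) (E : Finset (Fin n)) (hm : E.card = m) :
    Pm m → Pm m → Prop := fun s t =>
  ∃ a b c d : Fin m, a < b ∧ c < d ∧ s = Equiv.swap a b ∧ t = Equiv.swap c d ∧
    ord.le (Equiv.swap (↑(E.orderIsoOfFin hm a)) (↑(E.orderIsoOfFin hm b)))
           (Equiv.swap (↑(E.orderIsoOfFin hm c)) (↑(E.orderIsoOfFin hm d)))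

/-- Isomorphism of (unlabelled, or labelled with determined labels) directed graphs. -/
def GraphIso {α β : Type*} (V1 : Set α) (E1 : α → α → Prop)
    (V2 : Set β) (E2 : β → β → Prop) : Prop :=
  ∃ φ : α → β, Set.BijOn φ V1 V2 ∧ ∀ x ∈ V1, ∀ y ∈ V1, (E1 x y ↔ E2 (φ x) (φ y))

/-- Vertices of the `k`-crown: `u`, `a₁,…,a_k`, `b₁,…,b_k`, `v`. -/
def CrownV (k : ℕ) : Type := (Unit ⊕ Fin k) ⊕ (Fin k ⊕ Unit)

/-- Edges of the `k`-crown: `u → aᵢ`, `aᵢ → bᵢ`, `a_{i+1} → bᵢ` (indices mod `k`),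
`bᵢ → v`. -/
def crownEdge (k : ℕ) : CrownV k → CrownV k → Prop
  | Sum.inl (Sum.inl _), Sum.inl (Sum.inr _) => True
  | Sum.inl (Sum.inr i), Sum.inr (Sum.inl j) => i.val = j.val ∨ i.val = (j.val + 1) % k
  | Sum.inr (Sum.inl _), Sum.inr (Sum.inr _) => True
  | _, _ => False

/-- The set `W₁ · W₂` (internal direct product when supports are disjoint). -/
def dprod {n : ℕ} (W1 W2 : Subgroup (Pm n)) : Set (Pm n) :=
  {w | ∃ w1 ∈ W1, ∃ w2 ∈ W2, w = w1 * w2}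

/-- A path in the subgraph of the Bruhat graph induced on the subset `X`. -/
def IsPathIn (n : ℕ) (X : Set (Pm n)) (h : ℕ) (u v : Pm n) (p : ℕ → Pm n) : Prop :=
  IsPath n h u v p ∧ ∀ j, p j ∈ X

/-- Flip step within the induced subgraph on `X`. -/
def FlipStepIn (n : ℕ) (X : Set (Pm n)) (h : ℕ) (u v : Pm n) (p q : ℕ → Pm n) : Prop :=
  IsPathIn n X h u v p ∧ IsPathIn n X h u v q ∧ ∃ i, FlipAt h i p q

/-- Flipclass of paths in the induced subgraph on `X`. -/
def IsFlipclassIn (n : ℕ) (X : Set (Pm n)) (h : ℕ) (u v : Pm n)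
    (F : Set (ℕ → Pm n)) : Prop :=
  ∃ p, IsPathIn n X h u v p ∧ F = {q | Relation.ReflTransGen (FlipStepIn n X h u v) p q}

/-- `Δ` (a path of length `k`, normalized) is the projection (deduplication) of the
vertexwise-projected sequence `s` (defined on `0,…,hh`). -/
def IsProj (n hh k : ℕ) (s Δ : ℕ → Pm n) : Prop :=
  ∃ φ : ℕ → ℕ, Monotone φ ∧ φ 0 = 0 ∧ (∀ j, hh ≤ j → φ j = k) ∧
    (∀ j, j < hh →
      (s (j + 1) = s j ∧ φ (j + 1) = φ j) ∨ (s (j + 1) ≠ s j ∧ φ (j + 1) = φ j + 1)) ∧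
    (∀ j, j ≤ hh → s j = Δ (φ j)) ∧ ∀ j, k ≤ j → Δ j = Δ k

/-!
A flip replaces two consecutive labels `t₁, t₂` of a path by two others with the same product
`t₂ t₁ ≠ 1`, and the new labels only move letters moved by that product. Hence the labels of
all paths of a flipclass `F` of `u → v` move only letters of the set `E` moved by the labels of
one of them, `|E| ≤ 2h`, and all vertices of `F` lie in the coset `𝔖_E u`. The pattern map `r_E`
(forget the values outside `E` in one-line notation) is a bijection from this coset onto `𝔖_m`,
`m = |E|`, it turns left multiplication by `(a b)` into left multiplication by the renamed
transposition, and it respects Bruhat edges, because `ℓ((a b) w) > ℓ(w)` iff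
`w⁻¹(a) < w⁻¹(b)`. So `r_E` maps `F` isomorphically onto a flipclass of `𝔖_m` with
`m ≤ 2h`, and there are only finitely many of those.
-/

open Equiv Equiv.Perm MulAction

section Transpositions
variable {α : Type*} [DecidableEq α] [Fintype α]

lemma mem_fixingSubgroup_compl_iff {E : Finset α} {σ : Perm α} :
    σ ∈ fixingSubgroup (Perm α) (E : Set α)ᶜ ↔ σ.support ⊆ E := by
  simp only [mem_fixingSubgroup_iff, Set.mem_compl_iff, Finset.mem_coe, Perm.smul_def]
  exact ⟨fun h x hx => by_contra fun hxE => mem_support.mp hx (h x hxE),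
    fun h x hxE => by_contra fun hx => hxE (h (mem_support.mpr hx))⟩

lemma apply_mem_iff_of_mem_fixingSubgroup_compl {E : Finset α} {σ : Perm α}
    (hσ : σ ∈ fixingSubgroup (Perm α) (E : Set α)ᶜ) (x : α) : σ x ∈ E ↔ x ∈ E := by
  by_cases hx : x ∈ σ.support
  · have hE := mem_fixingSubgroup_compl_iff.mp hσ
    exact iff_of_true (hE (apply_mem_support.mpr hx)) (hE hx)
  · rw [notMem_support.mp hx]

lemma support_subset_support_mul_of_isSwap {s t : Perm α} (hs : s.IsSwap) (ht : t.IsSwap)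
    (hts : t * s ≠ 1) : s.support ⊆ (t * s).support := by
  obtain ⟨a, b, hab, rfl⟩ := hs
  obtain ⟨c, d, hcd, rfl⟩ := ht
  intro x hx
  rw [mem_support] at hx ⊢
  intro hfix
  apply hts
  ext y
  simp only [Perm.mul_apply, swap_apply_def, Perm.one_apply] at *
  split_ifs at * <;> grind

end Transpositions

abbrev symmOn {n : ℕ} (E : Finset (Fin n)) : Subgroup (Pm n) :=
  fixingSubgroup (Pm n) (E : Set (Fin n))ᶜ

section Length
variable {n : ℕ}

lemma len_lt_len_mul_swap {w : Pm n} {p q : Fin n} (hpq : p < q) (hw : w p < w q) :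
    len w < len (w * swap p q) := by
  classical
  set s := swap p q
  let inv (x : Pm n) := Finset.univ.filter fun z : Fin n × Fin n => z.1 < z.2 ∧ x z.2 < x z.1
  -- `(x, y) ↦ (s x, s y)` matches inversions of `w` with those of `w * s`, except where `s`
  -- reverses the order of the pair; there `w * s` keeps the inversion.
  let G (z : Fin n × Fin n) : Fin n × Fin n := if s z.1 < s z.2 then (s z.1, s z.2) else z
  have hmaps : ∀ z ∈ inv w, G z ∈ (inv (w * s)).erase (p, q) := by
    rintro ⟨x, y⟩ hz
    simp only [inv, G, s, Finset.mem_filter, Finset.mem_univ, true_and, Finset.mem_erase,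
      Perm.mul_apply, ne_eq] at hz ⊢
    simp only [swap_apply_def] at *
    split_ifs at * <;> grind
  have hinj : Set.InjOn G (inv w) := by
    have hss (z : Fin n) : s (s z) = z := swap_apply_self p q z
    rintro ⟨x, y⟩ hz ⟨x', y'⟩ hz' hG
    simp only [inv, Finset.coe_filter, Finset.mem_univ, true_and, Set.mem_ofPred_eq] at hz hz'
    simp only [G] at hG
    split_ifs at hG with hlt hlt' hlt'
    · simpa [s.injective.eq_iff] using hG
    · obtain ⟨rfl, rfl⟩ := Prod.mk.inj hG
      exact absurd (by simpa only [hss] using hz.1) hlt'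
    · obtain ⟨rfl, rfl⟩ := Prod.mk.inj hG
      exact absurd (by simpa only [hss] using hz'.1) hlt
    · exact hG
  have hpq_mem : (p, q) ∈ inv (w * s) := by
    refine Finset.mem_filter.mpr ⟨Finset.mem_univ _, hpq, ?_⟩
    simpa [s] using hw
  calc len w = (inv w).card := rfl
    _ ≤ ((inv (w * s)).erase (p, q)).card := Finset.card_le_card_of_injOn G hmaps hinj
    _ < (inv (w * s)).card := Finset.card_erase_lt_of_mem hpq_mem
    _ = len (w * s) := rfl

lemma len_lt_len_swap_mul_iff {w : Pm n} {a b : Fin n} (hab : a < b) :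
    len w < len (swap a b * w) ↔ w⁻¹ a < w⁻¹ b := by
  have key (w : Pm n) (hw : w⁻¹ a < w⁻¹ b) : len w < len (swap a b * w) := by
    simpa [mul_swap_eq_swap_mul] using len_lt_len_mul_swap (w := w) hw (by simpa using hab)
  refine ⟨fun hlt => ?_, key w⟩
  by_contra hge
  have hne : w⁻¹ b ≠ w⁻¹ a := by simpa using hab.ne'
  have := key (swap a b * w) (by simpa using lt_of_le_of_ne (not_lt.mp hge) hne)
  simp [← mul_assoc] at this
  omega

end Length

section PatternMap
variable {n m : ℕ} {E : Finset (Fin n)} (hm : E.card = m)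

lemma orderEmbOfFin_rE (w : Pm n) (x : Fin m) :
    E.orderEmbOfFin hm (rE n m E hm w x)
      = w ((posSet w E).orderEmbOfFin (by rw [posSet_card, hm]) x) := by
  simp [rE, ← Finset.coe_orderIsoOfFin_apply]

lemma posSet_mul_of_mem {σ : Pm n} (hσ : σ ∈ symmOn E) (w : Pm n) :
    posSet (σ * w) E = posSet w E := by
  ext x
  rw [mem_posSet, mem_posSet, Perm.mul_apply, apply_mem_iff_of_mem_fixingSubgroup_compl hσ]

lemma orderEmbOfFin_rE_mul {σ : Pm n} (hσ : σ ∈ symmOn E) (w : Pm n) (x : Fin m) :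
    E.orderEmbOfFin hm (rE n m E hm (σ * w) x) = σ (E.orderEmbOfFin hm (rE n m E hm w x)) := by
  simp only [orderEmbOfFin_rE, Perm.mul_apply, posSet_mul_of_mem hσ]

lemma rE_one : rE n m E hm 1 = 1 := by
  ext x
  have hE : posSet 1 E = E := by ext; simp [mem_posSet]
  have := orderEmbOfFin_rE hm 1 x
  simp only [hE, Perm.one_apply] at this
  exact congrArg Fin.val ((E.orderEmbOfFin hm).injective this)

lemma orderEmbOfFin_rE_of_mem {σ : Pm n} (hσ : σ ∈ symmOn E) (x : Fin m) :
    E.orderEmbOfFin hm (rE n m E hm σ x) = σ (E.orderEmbOfFin hm x) := by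
  simpa [rE_one] using orderEmbOfFin_rE_mul hm hσ 1 x

lemma rE_mul {σ : Pm n} (hσ : σ ∈ symmOn E) (w : Pm n) :
    rE n m E hm (σ * w) = rE n m E hm σ * rE n m E hm w := by
  ext x
  apply congrArg Fin.val
  apply (E.orderEmbOfFin hm).injective
  rw [orderEmbOfFin_rE_mul hm hσ, Perm.mul_apply, orderEmbOfFin_rE_of_mem hm hσ]

lemma swap_orderEmbOfFin_mem (x y : Fin m) :
    swap (E.orderEmbOfFin hm x) (E.orderEmbOfFin hm y) ∈ symmOn E := by
  rw [mem_fixingSubgroup_compl_iff]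
  intro z hz
  rcases (swap_apply_ne_self_iff.mp (mem_support.mp hz)).2 with rfl | rfl <;>
    exact Finset.orderEmbOfFin_mem _ _ _

lemma rE_swap (x y : Fin m) :
    rE n m E hm (swap (E.orderEmbOfFin hm x) (E.orderEmbOfFin hm y)) = swap x y := by
  ext z
  apply congrArg Fin.val
  apply (E.orderEmbOfFin hm).injective
  rw [orderEmbOfFin_rE_of_mem hm (swap_orderEmbOfFin_mem hm x y),
    (E.orderEmbOfFin hm).injective.map_swap]

lemma rE_injOn : Set.InjOn (rE n m E hm) (symmOn E) := by
  intro σ hσ τ hτ hστ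
  ext z
  by_cases hz : z ∈ E
  · obtain ⟨x, rfl⟩ : z ∈ Set.range (E.orderEmbOfFin hm) := by simpa using hz
    rw [← orderEmbOfFin_rE_of_mem hm hσ, ← orderEmbOfFin_rE_of_mem hm hτ, hστ]
  · have hfix := fun ρ (hρ : ρ ∈ symmOn E) => (mem_fixingSubgroup_iff _).mp hρ z hz
    rw [show σ z = z from hfix σ hσ, show τ z = z from hfix τ hτ]

lemma rE_surjOn : Set.SurjOn (rE n m E hm) (symmOn E) Set.univ := by
  intro P _
  induction P using swap_induction_on with
  | one => exact ⟨1, one_mem _, rE_one hm⟩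
  | swap_mul P x y _ ih =>
    obtain ⟨σ, hσ, rfl⟩ := ih trivial
    refine ⟨_, mul_mem (swap_orderEmbOfFin_mem hm x y) hσ, ?_⟩
    rw [rE_mul hm (swap_orderEmbOfFin_mem hm x y), rE_swap]

lemma rE_inv_lt_iff (w : Pm n) (x y : Fin m) :
    (rE n m E hm w)⁻¹ x < (rE n m E hm w)⁻¹ y
      ↔ w⁻¹ (E.orderEmbOfFin hm x) < w⁻¹ (E.orderEmbOfFin hm y) := by
  have key (z : Fin m) : w⁻¹ (E.orderEmbOfFin hm z)
      = (posSet w E).orderEmbOfFin (by rw [posSet_card, hm]) ((rE n m E hm w)⁻¹ z) := by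
    rw [Perm.inv_eq_iff_eq, ← orderEmbOfFin_rE hm]
    simp
  rw [key, key, OrderEmbedding.lt_iff_lt]

lemma exists_orderEmbOfFin_eq {σ : Pm n} (hσ : σ ∈ symmOn E) {a : Fin n}
    (ha : a ∈ σ.support) :
    ∃ x, E.orderEmbOfFin hm x = a := by
  change a ∈ Set.range _
  simpa using mem_fixingSubgroup_compl_iff.mp hσ ha

lemma exists_eq_swap_orderEmbOfFin {σ : Pm n} (hσ : σ ∈ symmOn E) (hs : σ.IsSwap) :
    ∃ x y, x < y ∧ σ = swap (E.orderEmbOfFin hm x) (E.orderEmbOfFin hm y) := by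
  obtain ⟨a, b, hab, rfl⟩ := hs
  obtain ⟨x, rfl⟩ := exists_orderEmbOfFin_eq hm hσ (a := a) (by simp [hab])
  obtain ⟨y, rfl⟩ := exists_orderEmbOfFin_eq hm hσ (a := b) (by simp [hab])
  rcases lt_or_gt_of_ne (fun hxy : x = y => hab (by rw [hxy])) with hxy | hxy
  · exact ⟨x, y, hxy, rfl⟩
  · exact ⟨y, x, hxy, swap_comm _ _⟩

lemma isSwap_rE_iff {σ : Pm n} (hσ : σ ∈ symmOn E) :
    (rE n m E hm σ).IsSwap ↔ σ.IsSwap := by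
  constructor
  · rintro ⟨x, y, hxy, hσxy⟩
    rw [← rE_swap hm] at hσxy
    rw [rE_injOn hm hσ (swap_orderEmbOfFin_mem hm x y) hσxy]
    exact ⟨_, _, (E.orderEmbOfFin hm).injective.ne hxy, rfl⟩
  · intro hs
    obtain ⟨x, y, hxy, rfl⟩ := exists_eq_swap_orderEmbOfFin hm hσ hs
    exact ⟨x, y, hxy.ne, rE_swap hm x y⟩

lemma bEdge_rE_mul_iff {σ : Pm n} (hσ : σ ∈ symmOn E) (w : Pm n) :
    BEdge (rE n m E hm w) (rE n m E hm (σ * w)) ↔ BEdge w (σ * w) := by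
  simp only [BEdge, rE_mul hm hσ, mul_inv_cancel_right, isSwap_rE_iff hm hσ]
  refine and_congr_right fun hs => ?_
  obtain ⟨x, y, hxy, rfl⟩ := exists_eq_swap_orderEmbOfFin hm hσ hs
  rw [rE_swap, len_lt_len_swap_mul_iff hxy,
    len_lt_len_swap_mul_iff ((E.orderEmbOfFin hm).strictMono hxy), rE_inv_lt_iff]

end PatternMap

section FlipTransfer
variable {n m h : ℕ} {u v : Pm n}

lemma lab_mul (q : ℕ → Pm n) (i : ℕ) : lab q i * q i = q (i + 1) := inv_mul_cancel_right _ _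

lemma isPath_of_reflTransGen {p q : ℕ → Pm n} (hp : IsPath n h u v p)
    (hpq : Relation.ReflTransGen (FlipStep n h u v) p q) : IsPath n h u v q := by
  rcases hpq.cases_tail with rfl | ⟨_, -, hs⟩
  exacts [hp, hs.2.1]

lemma forall_mem_of_reflTransGen {C : Set (Pm n)}
    (hC : ∀ q q', (∀ j, q j ∈ C) → FlipStep n h u v q q' → ∀ j, q' j ∈ C)
    {p q : ℕ → Pm n} (hpC : ∀ j, p j ∈ C) (hpq : Relation.ReflTransGen (FlipStep n h u v) p q) :
    ∀ j, q j ∈ C := by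
  induction hpq with
  | refl => exact hpC
  | tail _ hs ih => exact hC _ _ ih hs

lemma flipAt_comp {C : Set (Pm n)} {f : Pm n → Pm m} (hf : Set.InjOn f C) {i : ℕ}
    {q q' : ℕ → Pm n} (hqC : ∀ j, q j ∈ C) (hq'C : ∀ j, q' j ∈ C) (hs : FlipAt h i q q') :
    FlipAt h i (f ∘ q) (f ∘ q') :=
  ⟨hs.1, hs.2.1, fun he => hs.2.2.1 (hf (hqC i) (hq'C i) he),
    fun j hj => congrArg f (hs.2.2.2 j hj)⟩

structure IsBruhatIsoOn (C : Set (Pm n)) (f : Pm n → Pm m) : Prop where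
  bijOn : Set.BijOn f C Set.univ
  bEdge_iff : ∀ ⦃w⦄, w ∈ C → ∀ ⦃w'⦄, w' ∈ C → (BEdge (f w) (f w') ↔ BEdge w w')

namespace IsBruhatIsoOn
variable {C : Set (Pm n)} {f : Pm n → Pm m}

lemma isPath_comp (hf : IsBruhatIsoOn C f) {q : ℕ → Pm n} (hqC : ∀ j, q j ∈ C)
    (hq : IsPath n h u v q) : IsPath m h (f u) (f v) (f ∘ q) :=
  ⟨congrArg f hq.1, fun j hj => congrArg f (hq.2.1 j hj),
    fun i hi => (hf.bEdge_iff (hqC i) (hqC (i + 1))).mpr (hq.2.2 i hi)⟩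

lemma flipStep_comp (hf : IsBruhatIsoOn C f) {q q' : ℕ → Pm n} (hqC : ∀ j, q j ∈ C)
    (hq'C : ∀ j, q' j ∈ C) (hs : FlipStep n h u v q q') :
    FlipStep m h (f u) (f v) (f ∘ q) (f ∘ q') :=
  let ⟨hq, hq', i, hi⟩ := hs
  ⟨hf.isPath_comp hqC hq, hf.isPath_comp hq'C hq', i, flipAt_comp hf.bijOn.injOn hqC hq'C hi⟩

lemma exists_flipStep_of_flipStep_comp (hf : IsBruhatIsoOn C f) {q : ℕ → Pm n}
    (hqC : ∀ j, q j ∈ C) (hq : IsPath n h u v q) {Q : ℕ → Pm m}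
    (hs : FlipStep m h (f u) (f v) (f ∘ q) Q) :
    ∃ q', (∀ j, q' j ∈ C) ∧ FlipStep n h u v q q' ∧ f ∘ q' = Q := by
  classical
  obtain ⟨-, hQ, i, hi0, hih, hne, hagree⟩ := hs
  obtain ⟨y, hyC, hy⟩ := hf.bijOn.surjOn (Set.mem_univ (Q i))
  set q' := Function.update q i y
  have hq'C (j : ℕ) : q' j ∈ C := by
    rcases eq_or_ne j i with rfl | hj
    exacts [by simpa [q'] using hyC, by simpa [q', hj] using hqC j]
  have hfq' : f ∘ q' = Q := by
    funext j
    rcases eq_or_ne j i with rfl | hj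
    exacts [by simpa [q'] using hy, by simpa [q', hj] using hagree j hj]
  subst hfq'
  have hq' : IsPath n h u v q' := by
    refine ⟨by simpa [q', hi0.ne] using hq.1, fun j hj => ?_, fun j hj => ?_⟩
    · simpa [q', (hih.trans_le hj).ne'] using hq.2.1 j hj
    · exact (hf.bEdge_iff (hq'C j) (hq'C (j + 1))).mp (hQ.2.2 j hj)
  refine ⟨q', hq'C, ⟨hq, hq', i, hi0, hih, fun he => hne (congrArg f he), fun j hj => ?_⟩, rfl⟩
  simp [q', hj]

lemma image_flipOrbit (hf : IsBruhatIsoOn C f)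
    (hC : ∀ q q', (∀ j, q j ∈ C) → FlipStep n h u v q q' → ∀ j, q' j ∈ C)
    {p : ℕ → Pm n} (hpC : ∀ j, p j ∈ C) (hp : IsPath n h u v p) :
    (f ∘ ·) '' {q | Relation.ReflTransGen (FlipStep n h u v) p q}
      = {Q | Relation.ReflTransGen (FlipStep m h (f u) (f v)) (f ∘ p) Q} := by
  ext Q
  constructor
  · rintro ⟨q, hpq, rfl⟩
    induction hpq with
    | refl => exact .refl
    | @tail r r' hpr hs ih =>
      have hrC := forall_mem_of_reflTransGen hC hpC hpr
      exact ih.tail (hf.flipStep_comp hrC (hC r r' hrC hs) hs)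
  · intro hQ
    induction hQ with
    | refl => exact ⟨p, .refl, rfl⟩
    | tail _ hs ih =>
      obtain ⟨q, hpq, rfl⟩ := ih
      obtain ⟨q', -, hs', rfl⟩ := hf.exists_flipStep_of_flipStep_comp
        (forall_mem_of_reflTransGen hC hpC hpq) (isPath_of_reflTransGen hp hpq) hs
      exact ⟨q', hpq.tail hs', rfl⟩

end IsBruhatIsoOn

lemma flipclassIso_of_injOn {F : Set (ℕ → Pm n)} {F' : Set (ℕ → Pm m)} {C : Set (Pm n)}
    {f : Pm n → Pm m} (hFC : ∀ q ∈ F, ∀ j, q j ∈ C) (hf : Set.InjOn f C)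
    (himage : (f ∘ ·) '' F = F') (hlab : ∀ q ∈ F, ∀ i < h, f (lab q i) = lab (f ∘ q) i)
    (hlabinj : Set.InjOn f (labelSet n h F))
    (hlex : ∀ s t, s ∈ labelSet n h F → t ∈ labelSet n h F → lexLe n s t →
      lexLe m (f s) (f t)) :
    FlipclassIso n m h F F' := by
  subst himage
  refine ⟨f, f, ⟨?_, ?_, ?_⟩, ?_, ?_, ⟨?_, hlabinj, ?_⟩, ?_, hlex⟩
  · rintro _ ⟨q, hq, i, hi, rfl⟩
    exact ⟨f ∘ q, ⟨q, hq, rfl⟩, i, hi, rfl⟩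
  · rintro _ ⟨q, hq, i, -, rfl⟩ _ ⟨q', hq', i', -, rfl⟩ he
    exact hf (hFC q hq i) (hFC q' hq' i') he
  · rintro _ ⟨_, ⟨q, hq, rfl⟩, i, hi, rfl⟩
    exact ⟨q i, ⟨q, hq, i, hi, rfl⟩, rfl⟩
  · refine Set.InjOn.bijOn_image fun q hq q' hq' he => funext fun j => ?_
    exact hf (hFC q hq j) (hFC q' hq' j) (congrFun he j)
  · exact fun q hq q' hq' i => flipAt_comp hf (hFC q hq) (hFC q' hq')
  · rintro _ ⟨q, hq, i, hi, rfl⟩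
    exact ⟨f ∘ q, ⟨q, hq, rfl⟩, i, hi, (hlab q hq i hi).symm⟩
  · rintro _ ⟨_, ⟨q, hq, rfl⟩, i, hi, rfl⟩
    exact ⟨lab q i, ⟨q, hq, i, hi, rfl⟩, hlab q hq i hi⟩
  · exact hlab

end FlipTransfer

section SmallModel
variable {n m h : ℕ} {E : Finset (Fin n)}

lemma isBruhatIsoOn_rE (hm : E.card = m) (u : Pm n) :
    IsBruhatIsoOn {w | w * u⁻¹ ∈ symmOn E} (rE n m E hm) := by
  have hsplit (w : Pm n) (hw : w * u⁻¹ ∈ symmOn E) :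
      rE n m E hm w = rE n m E hm (w * u⁻¹) * rE n m E hm u := by
    rw [← rE_mul hm hw, inv_mul_cancel_right]
  refine ⟨⟨fun _ _ => Set.mem_univ _, fun w hw w' hw' he => ?_, fun P _ => ?_⟩,
    fun w hw w' hw' => ?_⟩
  · rw [hsplit w hw, hsplit w' hw', mul_left_inj] at he
    exact mul_left_injective _ (rE_injOn hm hw hw' he)
  · obtain ⟨σ, hσ, hσP⟩ := rE_surjOn hm (Set.mem_univ (P * (rE n m E hm u)⁻¹))
    refine ⟨σ * u, by simpa using hσ, ?_⟩
    rw [rE_mul hm hσ, hσP, inv_mul_cancel_right]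
  · have hσ : w' * w⁻¹ ∈ symmOn E := by
      simpa [mul_assoc] using mul_mem (Set.mem_ofPred.mp hw') (inv_mem (Set.mem_ofPred.mp hw))
    simpa using bEdge_rE_mul_iff hm hσ w

lemma lab_mem_of_mul_inv_mem {u : Pm n} {q : ℕ → Pm n} (hq : ∀ j, q j * u⁻¹ ∈ symmOn E)
    (i : ℕ) : lab q i ∈ symmOn E := by
  simpa [lab, mul_assoc] using mul_mem (hq (i + 1)) (inv_mem (hq i))

lemma lab_comp_rE (hm : E.card = m) {q : ℕ → Pm n} {i : ℕ} (hq : lab q i ∈ symmOn E) :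
    lab (rE n m E hm ∘ q) i = rE n m E hm (lab q i) := by
  change rE n m E hm (q (i + 1)) * (rE n m E hm (q i))⁻¹ = _
  rw [← lab_mul q i, rE_mul hm hq, mul_inv_cancel_right]

lemma FlipStep.mul_inv_mem {u v : Pm n} {q q' : ℕ → Pm n} (hq : ∀ j, q j * u⁻¹ ∈ symmOn E)
    (hs : FlipStep n h u v q q') (j : ℕ) : q' j * u⁻¹ ∈ symmOn E := by
  obtain ⟨hqp, hq'p, i, hi0, hih, -, hagree⟩ := hs
  obtain hj | rfl := ne_or_eq j i
  · rw [← hagree j hj]; exact hq j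
  obtain ⟨k, rfl⟩ : ∃ k, j = k + 1 := ⟨j - 1, by omega⟩
  have hprod : lab q' (k + 1) * lab q' k = q (k + 2) * (q k)⁻¹ := by
    rw [lab, lab, ← hagree k (by omega), ← hagree (k + 2) (by omega)]; group
  have hne : lab q' (k + 1) * lab q' k ≠ 1 := by
    rw [hprod, Ne, mul_inv_eq_one]
    intro he
    have h₁ := (hqp.2.2 k (by omega)).2
    have h₂ := (hqp.2.2 (k + 1) hih).2
    rw [he] at h₂
    omega
  have hlab : lab q' k ∈ symmOn E := by
    have hmem : lab q' (k + 1) * lab q' k ∈ symmOn E := by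
      rw [hprod]; simpa [mul_assoc] using mul_mem (hq (k + 2)) (inv_mem (hq k))
    rw [mem_fixingSubgroup_compl_iff] at hmem ⊢
    exact (support_subset_support_mul_of_isSwap (hq'p.2.2 k (by omega)).1
      (hq'p.2.2 (k + 1) hih).1 hne).trans hmem
  rw [← lab_mul q' k, ← hagree k (by omega), mul_assoc]
  exact mul_mem hlab (hq k)

lemma lexLe_rE (hm : E.card = m) {s t : Pm n} (hs : s ∈ symmOn E) (ht : t ∈ symmOn E)
    (hst : lexLe n s t) :
    lexLe m (rE n m E hm s) (rE n m E hm t) := by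
  obtain ⟨a, b, c, d, hab, hcd, rfl, rfl, hac⟩ := hst
  obtain ⟨x, rfl⟩ := exists_orderEmbOfFin_eq hm hs (a := a) (by simp [hab.ne])
  obtain ⟨y, rfl⟩ := exists_orderEmbOfFin_eq hm hs (a := b) (by simp [hab.ne])
  obtain ⟨x', rfl⟩ := exists_orderEmbOfFin_eq hm ht (a := c) (by simp [hcd.ne])
  obtain ⟨y', rfl⟩ := exists_orderEmbOfFin_eq hm ht (a := d) (by simp [hcd.ne])
  simp only [OrderEmbedding.lt_iff_lt, OrderEmbedding.le_iff_le,
    (E.orderEmbOfFin hm).injective.eq_iff] at hab hcd hac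
  exact ⟨x, y, x', y', hab, hcd, rE_swap hm x y, rE_swap hm x' y', hac⟩

def labelSupport (h : ℕ) (p : ℕ → Pm n) : Finset (Fin n) :=
  (Finset.range h).biUnion fun i => (lab p i).support

lemma card_labelSupport_le {u v : Pm n} {p : ℕ → Pm n} (hp : IsPath n h u v p) :
    (labelSupport h p).card ≤ 2 * h := by
  refine (Finset.card_biUnion_le_card_mul _ _ 2 fun i hi => ?_).trans_eq (by simp [mul_comm])
  exact (card_support_eq_two.mpr (hp.2.2 i (Finset.mem_range.mp hi)).1).le

lemma mul_inv_mem_of_isPath {u v : Pm n} {p : ℕ → Pm n} (hp : IsPath n h u v p) (j : ℕ) :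
    p j * u⁻¹ ∈ symmOn (labelSupport h p) := by
  induction j with
  | zero => simp [hp.1]
  | succ j ih =>
    have hlab : lab p j ∈ symmOn (labelSupport h p) := by
      rcases lt_or_ge j h with hj | hj
      · exact mem_fixingSubgroup_compl_iff.mpr
          (Finset.subset_biUnion_of_mem (fun i => (lab p i).support) (Finset.mem_range.mpr hj))
      · simp [lab, hp.2.1 j hj, hp.2.1 (j + 1) (hj.trans j.le_succ)]
    rw [← lab_mul p j, mul_assoc]
    exact mul_mem hlab ih

theorem IsFlipclass.exists_flipclassIso_le {u v : Pm n} {F : Set (ℕ → Pm n)}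
    (hF : IsFlipclass n h u v F) :
    ∃ m ≤ 2 * h, ∃ (u' v' : Pm m) (F' : Set (ℕ → Pm m)),
      IsFlipclass m h u' v' F' ∧ FlipclassIso n m h F F' := by
  obtain ⟨p, hp, rfl⟩ := hF
  set E := labelSupport h p
  set C : Set (Pm n) := {w | w * u⁻¹ ∈ symmOn E}
  have hf : IsBruhatIsoOn C (rE n E.card E rfl) := isBruhatIsoOn_rE rfl u
  have hC (q q' : ℕ → Pm n) (hq : ∀ j, q j ∈ C) (hs : FlipStep n h u v q q') :
      ∀ j, q' j ∈ C :=
    FlipStep.mul_inv_mem hq hs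
  have hpC : ∀ j, p j ∈ C := mul_inv_mem_of_isPath hp
  have hFC q (hq : Relation.ReflTransGen (FlipStep n h u v) p q) : ∀ j, q j ∈ C :=
    forall_mem_of_reflTransGen hC hpC hq
  have hlabC : labelSet n h {q | Relation.ReflTransGen (FlipStep n h u v) p q} ⊆ symmOn E := by
    rintro _ ⟨q, hq, i, -, rfl⟩
    exact lab_mem_of_mul_inv_mem (hFC q hq) i
  refine ⟨E.card, card_labelSupport_le hp, _, _, _, ⟨_, hf.isPath_comp hpC hp, rfl⟩,
    flipclassIso_of_injOn hFC hf.bijOn.injOn (hf.image_flipOrbit hC hpC hp) ?_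
      ((rE_injOn rfl).mono hlabC) fun s t hs ht => lexLe_rE rfl (hlabC hs) (hlabC ht)⟩
  exact fun q hq i _ => (lab_comp_rE rfl (lab_mem_of_mul_inv_mem (hFC q hq) i)).symm

end SmallModel

lemma finite_paths (m h : ℕ) : {p : ℕ → Pm m | ∃ u v, IsPath m h u v p}.Finite := by
  refine (Set.finite_range fun r : Fin (h + 1) → Pm m => fun j => r ⟨min j h, by omega⟩).subset ?_
  rintro p ⟨u, v, hp⟩
  refine ⟨fun i => p i, funext fun j => ?_⟩
  rcases le_total j h with hj | hj
  · simp [hj]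
  · simp [hj, hp.2.1 j hj, hp.2.1 h le_rfl]

lemma finite_flipclasses (m h : ℕ) :
    {x : Pm m × Pm m × Set (ℕ → Pm m) | IsFlipclass m h x.1 x.2.1 x.2.2}.Finite := by
  refine (Set.finite_univ.prod (Set.finite_univ.prod (finite_paths m h).finite_subsets)).subset ?_
  rintro ⟨u, v, F⟩ ⟨p, hp, hF⟩
  refine ⟨trivial, trivial, fun q hq => ⟨u, v, isPath_of_reflTransGen hp ?_⟩⟩
  rwa [hF] at hq

lemma finite_flipclasses_le (h N : ℕ) :
    {x : Σ n, Pm n × Pm n × Set (ℕ → Pm n) |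
      x.1 ≤ N ∧ IsFlipclass x.1 h x.2.1 x.2.2.1 x.2.2.2}.Finite := by
  refine ((Set.finite_Iic N).biUnion fun m _ =>
    (finite_flipclasses m h).image (Sigma.mk m)).subset ?_
  rintro ⟨m, x⟩ ⟨hm, hx⟩
  exact Set.mem_biUnion hm ⟨x, hx, rfl⟩

/-- Corollary: for fixed `h`, there are finitely many isomorphism classes of
`h`-flipclasses (over all symmetric groups `𝔖ₙ`). -/
theorem finitely_many_flipclasses (h : ℕ) :
    ∃ k : ℕ, ∃ reps : Fin k → (Σ n : ℕ, Pm n × Pm n × Set (ℕ → Pm n)),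
      (∀ j, IsFlipclass (reps j).1 h (reps j).2.1 (reps j).2.2.1 (reps j).2.2.2) ∧
      ∀ (n : ℕ) (u v : Pm n) (F : Set (ℕ → Pm n)), IsFlipclass n h u v F →
        ∃ j, FlipclassIso n (reps j).1 h F (reps j).2.2.2 := by
  obtain ⟨k, reps, hreps⟩ := (finite_flipclasses_le h (2 * h)).fin_embedding
  refine ⟨k, reps, fun j => (hreps.subset (Set.mem_range_self j)).2, fun n u v F hF => ?_⟩
  obtain ⟨m, hm, u', v', F', hF', hiso⟩ := hF.exists_flipclassIso_le
  obtain ⟨j, hj⟩ : ⟨m, u', v', F'⟩ ∈ Set.range reps := hreps ▸ ⟨hm, hF'⟩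
  exact ⟨j, by rw [hj]; exact hiso⟩
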